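/- arXiv:1311.0088 — 6 statements merged into one kernel-verified Lean document; each statement's English description precedes it below -/
import Mathlib

section
/- Let R be a commutative ring and L : R^n → R^m (with m ≤ n) an R-linear map given by a matrix. Let a_L = ann(coker L) and I_m(L) the ideal generated by the m×m minors of L. Then I_m(L) ⊆ a_L and (a_L)^m ⊆ I_m(L). -/
/-!
A maximal minor `det M` of `L` lies in `a_L` by Cramer's rule: `M (adj M v) = det M • v`, and the
image of `M` lies in the image of `L`. Conversely, given `f₁, …, f_m ∈ a_L`, choose `w_i` with
`L w_i = f_i e_i`; the matrix `W` with columns `w_i` satisfies `L W = diag f`, and the Cauchy–Binet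
expansion of `det (L W) = ∏ f_i` is a combination of maximal minors of `L` (the terms indexed by
non-injective column choices vanish).
-/

/-- The ideal of maximal (`m × m`) minors of a matrix `L ∈ Mat(m,n;R)`. -/
noncomputable def maxMinorsIdeal {R : Type*} [CommRing R] {m n : ℕ}
    (L : Matrix (Fin m) (Fin n) R) : Ideal R :=
  Ideal.span { d : R | ∃ g : Fin m ↪ Fin n, d = (L.submatrix id g).det }

/-- The annihilator of the cokernel of `L : R^n → R^m`,
i.e. `{f ∈ R : f • R^m ⊆ L(R^n)}`. -/
noncomputable def annCoker {R : Type*} [CommRing R] {m n : ℕ}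
    (L : Matrix (Fin m) (Fin n) R) : Ideal R :=
  (LinearMap.range L.mulVecLin).colon ⊤

open Matrix

namespace Matrix

variable {R : Type*} [CommRing R] {m n : Type*}

theorem det_smul_mem_range_mulVecLin [Fintype m] [DecidableEq m] (M : Matrix m m R)
    (v : m → R) : M.det • v ∈ LinearMap.range M.mulVecLin :=
  ⟨M.adjugate *ᵥ v, by
    rw [mulVecLin_apply, mulVec_mulVec, mul_adjugate, smul_mulVec, one_mulVec]⟩

theorem range_mulVecLin_mul_le [Fintype m] [Fintype n] (L : Matrix m n R) (P : Matrix n m R) :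
    LinearMap.range (L * P).mulVecLin ≤ LinearMap.range L.mulVecLin := by
  rw [mulVecLin_mul]
  exact LinearMap.range_comp_le_range _ _

theorem det_submatrix_smul_mem_range_mulVecLin [Fintype m] [DecidableEq m] [Fintype n]
    [DecidableEq n] (L : Matrix m n R) (g : m → n) (v : m → R) :
    (L.submatrix id g).det • v ∈ LinearMap.range L.mulVecLin := by
  have hP : L * (1 : Matrix n n R).submatrix id g = L.submatrix id g := by
    simpa using mul_submatrix_one (Equiv.refl n) g L
  exact range_mulVecLin_mul_le L _ (by rw [hP]; exact det_smul_mem_range_mulVecLin _ v)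

theorem det_mul_eq_sum_prod_mul_det_submatrix [Fintype m] [DecidableEq m] [Fintype n]
    (L : Matrix m n R) (W : Matrix n m R) :
    (L * W).det = ∑ σ : m → n, (∏ i, W (σ i) i) * (L.submatrix id σ).det := by
  have hrows : Wᵀ * Lᵀ = of fun i => ∑ j, W j i • Lᵀ j := by
    ext i k
    simp [mul_apply, mul_comm]
  rw [← det_transpose, transpose_mul, hrows]
  change detRowAlternating.toMultilinearMap (fun i => ∑ j, W j i • Lᵀ j) = _
  rw [MultilinearMap.map_sum]
  refine Finset.sum_congr rfl fun σ _ => ?_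
  rw [← det_transpose (L.submatrix id σ), ← smul_eq_mul]
  exact detRowAlternating.toMultilinearMap.map_smul_univ (fun i => W (σ i) i) (fun i => Lᵀ (σ i))

theorem det_submatrix_eq_zero_of_not_injective [Fintype m] [DecidableEq m] {L : Matrix m n R}
    {σ : m → n} (hσ : ¬ Function.Injective σ) : (L.submatrix id σ).det = 0 := by
  obtain ⟨i, j, hij, hne⟩ := Function.not_injective_iff.mp hσ
  exact det_zero_of_column_eq hne fun k => by simp [hij]

theorem exists_mul_eq_diagonal [Fintype m] [DecidableEq m] [Fintype n] (L : Matrix m n R)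
    {f : m → R} (hf : ∀ i, f i ∈ (LinearMap.range L.mulVecLin).colon ⊤) :
    ∃ W : Matrix n m R, L * W = diagonal f := by
  choose w hw using fun i => Submodule.mem_colon.mp (hf i) (Pi.single i 1) trivial
  refine ⟨(of w)ᵀ, ?_⟩
  ext k i
  have hcol := congrFun (hw i) k
  simp only [mulVecLin_apply, mulVec, dotProduct] at hcol
  rw [mul_apply]
  simp only [transpose_apply, of_apply, hcol, diagonal_apply, Pi.smul_apply, Pi.single_apply,
    smul_eq_mul, mul_ite, mul_one, mul_zero]
  split_ifs with hki <;> simp [hki]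

end Matrix

section

variable {R : Type*} [CommRing R] {m n : ℕ}

theorem maxMinorsIdeal_le_annCoker (L : Matrix (Fin m) (Fin n) R) :
    maxMinorsIdeal L ≤ annCoker L := by
  rw [maxMinorsIdeal, Ideal.span_le]
  rintro _ ⟨g, rfl⟩
  exact Submodule.mem_colon.mpr fun v _ => det_submatrix_smul_mem_range_mulVecLin L g v

theorem det_mul_mem_maxMinorsIdeal (L : Matrix (Fin m) (Fin n) R) (W : Matrix (Fin n) (Fin m) R) :
    (L * W).det ∈ maxMinorsIdeal L := by
  rw [det_mul_eq_sum_prod_mul_det_submatrix]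
  refine Ideal.sum_mem _ fun σ _ => ?_
  by_cases hσ : Function.Injective σ
  · exact Ideal.mul_mem_left _ _ (Ideal.subset_span ⟨⟨σ, hσ⟩, rfl⟩)
  · simp [det_submatrix_eq_zero_of_not_injective hσ]

theorem prod_mem_maxMinorsIdeal (L : Matrix (Fin m) (Fin n) R) {f : Fin m → R}
    (hf : ∀ i, f i ∈ annCoker L) : ∏ i, f i ∈ maxMinorsIdeal L := by
  obtain ⟨W, hW⟩ := exists_mul_eq_diagonal L hf
  simpa [hW] using det_mul_mem_maxMinorsIdeal L W

theorem annCoker_pow_le_maxMinorsIdeal (L : Matrix (Fin m) (Fin n) R) :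
    annCoker L ^ m ≤ maxMinorsIdeal L := by
  rw [Submodule.pow_eq_span_pow_set, Submodule.span_le]
  intro x hx
  obtain ⟨f, rfl⟩ := Set.mem_pow.mp hx
  rw [List.prod_ofFn]
  exact prod_mem_maxMinorsIdeal L fun i => (f i).2

end

theorem stmt0_general {R : Type*} [CommRing R] {m n : ℕ}
    (L : Matrix (Fin m) (Fin n) R) :
    maxMinorsIdeal L ≤ annCoker L ∧ (annCoker L) ^ m ≤ maxMinorsIdeal L :=
  ⟨maxMinorsIdeal_le_annCoker L, annCoker_pow_le_maxMinorsIdeal L⟩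

/-- For `L ∈ Mat(m,n;R)` with `m ≤ n`, one has `I_m(L) ⊆ a_L` and `(a_L)^m ⊆ I_m(L)`. -/
theorem stmt0 {R : Type*} [CommRing R] {m n : ℕ} (hmn : m ≤ n)
    (L : Matrix (Fin m) (Fin n) R) :
    maxMinorsIdeal L ≤ annCoker L ∧ (annCoker L) ^ m ≤ maxMinorsIdeal L :=
  stmt0_general L
end

section
/- Let R be a commutative ring, a ⊆ R an ideal, and J a finitely generated ideal with a ⊆ J and J² ⊆ J·a. Then J is contained in the integral closure of a, i.e. every element of J is integral over a. -/
/-! Multiplication by `x ∈ J` maps the finitely generated ideal `J` into `a • J`, because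
`x J ⊆ J² ⊆ a J`. The Cayley–Hamilton theorem in Matsumura's form then gives a monic `p`
whose `k`-th coefficient lies in `a ^ (deg p - k)` and with `p(x) J = 0`. Evaluating at
`x ∈ J` itself, `x p(x) = 0` is an equation of integral dependence of `x` over `a`. -/

open Polynomial

namespace Ideal

variable {R : Type*} [CommRing R]

def IsIntegralElem (a : Ideal R) (x : R) : Prop :=
  ∃ n : ℕ, 0 < n ∧ ∃ c : ℕ → R,
    (∀ i, 1 ≤ i → i ≤ n → c i ∈ a ^ i) ∧
    x ^ n + ∑ i ∈ Finset.Icc 1 n, c i * x ^ (n - i) = 0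

theorem _root_.Polynomial.Monic.eval_eq_pow_add_sum_Icc {p : R[X]} (hp : p.Monic) (x : R) :
    p.eval x = x ^ p.natDegree +
      ∑ i ∈ Finset.Icc 1 p.natDegree, p.coeff (p.natDegree - i) * x ^ (p.natDegree - i) := by
  set n := p.natDegree
  have hreflect : ∑ i ∈ Finset.Icc 1 n, p.coeff (n - i) * x ^ (n - i) =
      ∑ k ∈ Finset.range n, p.coeff k * x ^ k :=
    Finset.sum_nbij' (fun i => n - i) (fun k => n - k)
      (by intro i hi; simp only [Finset.mem_Icc, Finset.mem_range] at *; omega)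
      (by intro k hk; simp only [Finset.mem_Icc, Finset.mem_range] at *; omega)
      (by intro i hi; simp only [Finset.mem_Icc] at hi; omega)
      (by intro k hk; simp only [Finset.mem_range] at hk; omega)
      (fun _ _ => rfl)
  rw [hreflect, eval_eq_sum_range, Finset.sum_range_succ, hp.coeff_natDegree, one_mul, add_comm]

theorem isIntegralElem_of_monic (a : Ideal R) {p : R[X]} (hp : p.Monic) (hdeg : 0 < p.natDegree)
    (hcoeff : ∀ k, p.coeff k ∈ a ^ (p.natDegree - k)) {x : R} (hx : p.eval x = 0) :
    a.IsIntegralElem x := by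
  refine ⟨p.natDegree, hdeg, fun i => p.coeff (p.natDegree - i), fun i _ hi => ?_, ?_⟩
  · simpa only [Nat.sub_sub_self hi] using hcoeff (p.natDegree - i)
  · rw [← hp.eval_eq_pow_add_sum_Icc, hx]

theorem exists_monic_coeff_mem_pow_eval_mul_eq_zero (a : Ideal R) {I : Ideal R} (hI : I.FG)
    {x : R} (hx : ∀ y ∈ I, x * y ∈ a * I) :
    ∃ p : R[X], p.Monic ∧ (∀ k, p.coeff k ∈ a ^ (p.natDegree - k)) ∧
      ∀ y ∈ I, p.eval x * y = 0 := by
  have : Module.Finite R I := Module.Finite.iff_fg.mpr hI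
  have hrange : LinearMap.range (LinearMap.lsmul R I x) ≤ a • ⊤ := by
    rintro _ ⟨y, rfl⟩
    rw [Submodule.mem_smul_top_iff]
    simpa [Ideal.smul_eq_mul] using hx y y.2
  obtain ⟨p, hmonic, -, hcoeff, hp⟩ :=
    LinearMap.exists_monic_and_natDegree_eq_and_coeff_mem_pow_and_aeval_eq_zero R _ a hrange
  refine ⟨p, hmonic, hcoeff, fun y hy => ?_⟩
  have hlsmul : LinearMap.lsmul R I x = algebraMap R (Module.End R I) x := by
    ext; simp [Module.algebraMap_end_apply]
  rw [hlsmul, aeval_algebraMap_apply_eq_algebraMap_eval] at hp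
  simpa using congrArg (fun f : Module.End R I => (f ⟨y, hy⟩ : R)) hp

theorem isIntegralElem_of_mem_of_forall_mul_mem (a : Ideal R) {I : Ideal R} (hI : I.FG)
    {x : R} (hxI : x ∈ I) (hx : ∀ y ∈ I, x * y ∈ a * I) : a.IsIntegralElem x := by
  cases subsingleton_or_nontrivial R
  · exact ⟨1, one_pos, 0, fun _ _ _ => zero_mem _, Subsingleton.elim _ _⟩
  obtain ⟨p, hp, hcoeff, hann⟩ := exists_monic_coeff_mem_pow_eval_mul_eq_zero a hI hx
  have hdeg : (X * p).natDegree = p.natDegree + 1 := by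
    rw [mul_comm, natDegree_mul_X hp.ne_zero]
  refine isIntegralElem_of_monic a (monic_X.mul hp) (by omega) (fun k => ?_) ?_
  · cases k with
    | zero => simp
    | succ k => simpa [hdeg] using hcoeff k
  · simpa [mul_comm] using hann x hxI

end Ideal

theorem stmt5_general {R : Type*} [CommRing R] (a J : Ideal R)
    (hfg : J.FG) (hJ : J * J ≤ J * a) :
    ∀ x ∈ J, ∃ n : ℕ, 0 < n ∧ ∃ c : ℕ → R,
      (∀ i, 1 ≤ i → i ≤ n → c i ∈ a ^ i) ∧
      x ^ n + ∑ i ∈ Finset.Icc 1 n, c i * x ^ (n - i) = 0 := by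
  intro x hx
  exact a.isIntegralElem_of_mem_of_forall_mul_mem hfg hx fun y hy =>
    mul_comm J a ▸ hJ (Ideal.mul_mem_mul hx hy)

/-- If `a ⊆ J`, `J` is finitely generated and `J² ⊆ J·a`, then every element of `J`
is integral over `a`: it satisfies `x^n + c₁x^{n-1} + … + c_n = 0` with `cᵢ ∈ aⁱ`. -/
theorem stmt5 {R : Type*} [CommRing R] (a J : Ideal R)
    (haJ : a ≤ J) (hfg : J.FG) (hJ : J * J ≤ J * a) :
    ∀ x ∈ J, ∃ n : ℕ, 0 < n ∧ ∃ c : ℕ → R,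
      (∀ i, 1 ≤ i → i ≤ n → c i ∈ a ^ i) ∧
      x ^ n + ∑ i ∈ Finset.Icc 1 n, c i * x ^ (n - i) = 0 :=
  stmt5_general a J hfg hJ
end

section
/- Let R = k[[x,y,z]] over a field k, p ≥ 1, and a = (x^p, y^p, z^p). Then the ideal J_z = ((x,y)^p, z^p) satisfies J_z² = J_z·a. -/
/-!
Write `I = (x, y)`. The monomials `x^i y^(2p-i)` spanning `I^(2p)` have `i ≥ p` or `2p - i ≥ p`,
so `I^p · I^p ⊆ (x^p, y^p) · I^p ⊆ a · I^p`. Expanding `J_z² = (I^p + (z^p))²`, every product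
other than `I^p · I^p` already contains a factor `(z^p) ⊆ a`.
-/

open MvPowerSeries

namespace Ideal

variable {R : Type*} [CommSemiring R]

lemma sup_pow_add_le_pow_mul_sup_pow_mul (I J : Ideal R) (n m : ℕ) :
    (I ⊔ J) ^ (n + m) ≤ I ^ n * (I ⊔ J) ^ m ⊔ J ^ m * (I ⊔ J) ^ n := by
  rw [← add_eq_sup, add_pow, sum_eq_sup]
  refine Finset.sup_le fun i _ ↦ mul_le_left.trans ?_
  have hIJ (a b : ℕ) : I ^ a * J ^ b ≤ (I + J) ^ (a + b) := by
    rw [pow_add]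
    exact mul_mono (pow_right_mono le_sup_left a) (pow_right_mono le_sup_right b)
  by_cases hn : n ≤ i
  · obtain ⟨c, rfl⟩ := Nat.exists_eq_add_of_le hn
    calc I ^ (n + c) * J ^ (n + m - (n + c)) = I ^ n * (I ^ c * J ^ (m - c)) := by
          rw [pow_add, mul_assoc, Nat.add_sub_add_left]
      _ ≤ I ^ n * (I ⊔ J) ^ m :=
          mul_mono_right ((hIJ c (m - c)).trans (pow_le_pow_right (by omega)))
      _ ≤ _ := le_sup_left
  · calc I ^ i * J ^ (n + m - i) = J ^ m * (I ^ i * J ^ (n - i)) := by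
          rw [mul_left_comm, ← pow_add]; congr 2; omega
      _ ≤ J ^ m * (I ⊔ J) ^ n :=
          mul_mono_right ((hIJ i (n - i)).trans (pow_le_pow_right (by omega)))
      _ ≤ _ := le_sup_right

lemma span_pair_pow_mul_self_le (x y : R) (p : ℕ) :
    span {x, y} ^ p * span {x, y} ^ p ≤ span {x, y} ^ p * span {x ^ p, y ^ p} := by
  have hxy : span {x, y} = span {x} ⊔ span {y} := span_insert x {y}
  calc span {x, y} ^ p * span {x, y} ^ p = span {x, y} ^ (p + p) := (pow_add _ _ _).symm
    _ ≤ span {x} ^ p * span {x, y} ^ p ⊔ span {y} ^ p * span {x, y} ^ p := by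
        rw [hxy]; exact sup_pow_add_le_pow_mul_sup_pow_mul _ _ p p
    _ = span {x, y} ^ p * span {x ^ p, y ^ p} := by
        rw [span_singleton_pow, span_singleton_pow, ← sup_mul, ← span_insert, Ideal.mul_comm]

lemma sup_mul_self_eq_mul_of_le {K Z a : Ideal R} (hZa : Z ≤ a) (haKZ : a ≤ K ⊔ Z)
    (hKK : K * K ≤ K * a) : (K ⊔ Z) * (K ⊔ Z) = (K ⊔ Z) * a := by
  refine le_antisymm ?_ (mul_mono_right haKZ)
  rw [sup_mul, mul_sup]
  refine sup_le (sup_le ?_ ?_) ?_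
  · exact hKK.trans (mul_mono_left le_sup_left)
  · exact mul_mono le_sup_left hZa
  · rw [Ideal.mul_comm]
    exact mul_mono le_rfl hZa

end Ideal

theorem stmt6_general {k : Type*} [Field k] (p : ℕ) :
    let R := MvPowerSeries (Fin 3) k
    let x : R := X 0
    let y : R := X 1
    let z : R := X 2
    let a : Ideal R := Ideal.span {x ^ p, y ^ p, z ^ p}
    let Jz : Ideal R := (Ideal.span {x, y}) ^ p ⊔ Ideal.span {z ^ p}
    Jz * Jz = Jz * a := by
  intro R x y z a Jz
  have hx : x ∈ Ideal.span {x, y} := Ideal.subset_span (by simp)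
  have hy : y ∈ Ideal.span {x, y} := Ideal.subset_span (by simp)
  have haJz : a ≤ Jz := by
    simp only [a, Ideal.span_le, Set.insert_subset_iff, Set.singleton_subset_iff]
    exact ⟨Ideal.mem_sup_left (Ideal.pow_mem_pow hx p), Ideal.mem_sup_left (Ideal.pow_mem_pow hy p),
      Ideal.mem_sup_right (Ideal.mem_span_singleton_self _)⟩
  refine Ideal.sup_mul_self_eq_mul_of_le (Ideal.span_mono (by simp)) haJz ?_
  exact (Ideal.span_pair_pow_mul_self_le x y p).trans
    (Ideal.mul_mono_right (Ideal.span_mono (by simp [Set.insert_subset_iff])))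

/-- In `R = k[[x,y,z]]`, with `a = (x^p,y^p,z^p)` and `J_z = ((x,y)^p, z^p)`,
one has `J_z² = J_z·a`. -/
theorem stmt6 {k : Type*} [Field k] [CharZero k] (p : ℕ) (hp : 1 ≤ p) :
    let R := MvPowerSeries (Fin 3) k
    let x : R := X 0
    let y : R := X 1
    let z : R := X 2
    let a : Ideal R := Ideal.span {x ^ p, y ^ p, z ^ p}
    let Jz : Ideal R := (Ideal.span {x, y}) ^ p ⊔ Ideal.span {z ^ p}
    Jz * Jz = Jz * a :=
  stmt6_general p
end

section
/- Let R = k[[x_1,x_2]] over a field k and L = (x_1^k, x_2^k) ∈ Mat(1,2;R) for k ≥ 1. Then the ideal m^k = (x_1,x_2)^k satisfies (m^k)² = m^k·(x_1^k, x_2^k). -/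
/-!
The identity holds for any two elements `x, y` of a commutative ring. The ideal `(x, y)^(2n)` is
spanned by the monomials `x^i y^j` with `i + j = 2n`; one of `i, j` is at least `n`, so each such
monomial is a monomial of degree `n` times `x^n` or `y^n`.
-/

open MvPowerSeries
open scoped Pointwise

namespace Ideal

variable {R : Type*} [CommRing R]

lemma exists_eq_pow_mul_pow_of_mem_pair_pow {x y p : R} {n : ℕ}
    (hp : p ∈ ({x, y} : Set R) ^ n) : ∃ i j, i + j = n ∧ p = x ^ i * y ^ j := by
  induction n generalizing p with
  | zero => exact ⟨0, 0, rfl, by simpa using hp⟩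
  | succ n ih =>
    obtain ⟨a, ha, b, hb, rfl⟩ := Set.mem_mul.1 (pow_succ ({x, y} : Set R) n ▸ hp)
    obtain ⟨i, j, hij, rfl⟩ := ih ha
    rcases hb with rfl | rfl
    · exact ⟨i + 1, j, by omega, by ring⟩
    · exact ⟨i, j + 1, by omega, by ring⟩

lemma pow_mul_pow_mem_span_pair_pow (x y : R) (i j : ℕ) :
    x ^ i * y ^ j ∈ span {x, y} ^ (i + j) := by
  rw [pow_add]
  exact mul_mem_mul (pow_mem_pow (subset_span (by simp)) i)
    (pow_mem_pow (subset_span (by simp)) j)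

theorem span_pair_pow_mul_self (x y : R) (n : ℕ) :
    span {x, y} ^ n * span {x, y} ^ n = span {x, y} ^ n * span {x ^ n, y ^ n} := by
  refine le_antisymm ?_ (mul_mono_right (span_le.2 ?_))
  · rw [← pow_add, span, Submodule.span_pow, ← span, span_le]
    intro p hp
    obtain ⟨i, j, hij, rfl⟩ := exists_eq_pow_mul_pow_of_mem_pair_pow hp
    rcases le_or_gt n i with hi | hi
    · obtain ⟨i', rfl⟩ := Nat.exists_eq_add_of_le hi
      have hsplit : x ^ (n + i') * y ^ j = x ^ i' * y ^ j * x ^ n := by ring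
      rw [hsplit, show n = i' + j by omega]
      exact mul_mem_mul (pow_mul_pow_mem_span_pair_pow x y i' j) (subset_span (by simp))
    · obtain ⟨j', rfl⟩ := Nat.exists_eq_add_of_le (show n ≤ j by omega)
      have hsplit : x ^ i * y ^ (n + j') = x ^ i * y ^ j' * y ^ n := by ring
      rw [hsplit, show n = i + j' by omega]
      exact mul_mem_mul (pow_mul_pow_mem_span_pair_pow x y i j') (subset_span (by simp))
  · rintro p (rfl | rfl)
    · simpa using pow_mul_pow_mem_span_pair_pow x y n 0
    · simpa using pow_mul_pow_mem_span_pair_pow x y 0 n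

end Ideal

theorem stmt7_general {K : Type*} [Field K] (k : ℕ) :
    let R := MvPowerSeries (Fin 2) K
    let x₁ : R := X 0
    let x₂ : R := X 1
    let m : Ideal R := Ideal.span {x₁, x₂}
    (m ^ k) * (m ^ k) = (m ^ k) * Ideal.span {x₁ ^ k, x₂ ^ k} :=
  Ideal.span_pair_pow_mul_self _ _ k

/-- In `R = k[[x₁,x₂]]`, the ideal `m^k = (x₁,x₂)^k` satisfies
`(m^k)² = m^k·(x₁^k, x₂^k)`. -/
theorem stmt7 {K : Type*} [Field K] [CharZero K] (k : ℕ) (hk : 1 ≤ k) :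
    let R := MvPowerSeries (Fin 2) K
    let x₁ : R := X 0
    let x₂ : R := X 1
    let m : Ideal R := Ideal.span {x₁, x₂}
    (m ^ k) * (m ^ k) = (m ^ k) * Ideal.span {x₁ ^ k, x₂ ^ k} :=
  stmt7_general k
end

section
/- Let V, W be groups, L : V → W a group homomorphism, (V_j) a descending filtration of V by normal subgroups, and H : V → W a map with H(1)=1 and H(y)^{-1}H(yv) ∈ L(V_{j+1}) for all y ∈ V₁, v ∈ V_j, j ≥ 1. Then for every v ∈ V₁ there exists a sequence (y^{(n)}) in V₁ with y^{(1)} = v, y^{(n+1)}(y^{(n)})^{-1} ∈ V_{n+1}, and L(y^{(n)})H(y^{(n)})L(v)^{-1} ∈ L(V_{n+1}) for all n. -/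
/-!
If `L w` is the defect `L(y) H(y) L(v)⁻¹` of an approximate solution `y` with `w ∈ V_{n+1}`, then
`y' = w⁻¹ y = y u` with `u = y⁻¹ w⁻¹ y ∈ V_{n+1}`, so `H(y') ∈ H(y) L(V_{n+2})` and the defect of `y'`
is `L w⁻¹ · L w L v · L(V_{n+2}) · L v⁻¹ = L(v V_{n+2} v⁻¹) = L(V_{n+2})`. Starting from `y = 1`,
`w = v⁻¹` this gives `y⁽¹⁾ = v`, and iterating it gives the sequence.
-/

open scoped commutatorElement

theorem exists_seq_of_exists_step {α : Type*} (P : ℕ → α → Prop) (R : ℕ → α → α → Prop)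
    {a : α} (ha : P 0 a) (step : ∀ n a, P n a → ∃ b, R n a b ∧ P (n + 1) b) :
    ∃ y : ℕ → α, y 0 = a ∧ ∀ n, P n (y n) ∧ R n (y n) (y (n + 1)) := by
  choose next hnextR hnextP using step
  let y : ∀ n, {b // P n b} :=
    fun n => Nat.rec ⟨a, ha⟩ (fun n b => ⟨next n b.1 b.2, hnextP n b.1 b.2⟩) n
  exact ⟨fun n => (y n).1, rfl, fun n => ⟨(y n).2, hnextR n (y n).1 (y n).2⟩⟩

section Defect

variable {V W : Type*} [Group V] [Group W]

def defect (L : V →* W) (H : V → W) (v y : V) : W := L y * H y * (L v)⁻¹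

theorem defect_inv_mul_mem_map {L : V →* W} {H : V → W} {N M : Subgroup V} [hN : N.Normal]
    [hM : M.Normal] {v y w : V} (hw : w ∈ N) (hdefect : defect L H v y = L w)
    (hH : ∀ u ∈ N, (H y)⁻¹ * H (y * u) ∈ M.map L) :
    defect L H v (w⁻¹ * y) ∈ M.map L := by
  have hu : y⁻¹ * w⁻¹ * y ∈ N := by
    simpa [mul_assoc] using hN.conj_mem w⁻¹ (inv_mem hw) y⁻¹
  obtain ⟨z, hz, hLz⟩ := hH _ hu
  have hHy' : H (w⁻¹ * y) = H y * L z := by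
    rw [hLz, show y * (y⁻¹ * w⁻¹ * y) = w⁻¹ * y by group]
    group
  have hLyHy : L y * H y = L w * L v := by
    rw [← hdefect, defect]
    group
  refine ⟨v * z * v⁻¹, hM.conj_mem z hz v, ?_⟩
  calc L (v * z * v⁻¹) = (L w)⁻¹ * (L y * H y) * L z * (L v)⁻¹ := by
        rw [hLyHy]; simp only [map_mul, map_inv]; group
    _ = defect L H v (w⁻¹ * y) := by
        rw [defect, hHy']; simp only [map_mul, map_inv]; group

end Defect

theorem stmt11_general {V W : Type*} [Group V] [Group W] (L : V →* W)
    (Vf : ℕ → Subgroup V)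
    (hdesc : ∀ j, Vf (j + 1) ≤ Vf j)
    (hnormal : ∀ j, (Vf j).Normal)
    (H : V → W) (hH1 : H 1 = 1)
    (hHord : ∀ y ∈ Vf 1, ∀ j, 1 ≤ j → ∀ v ∈ Vf j,
      (H y)⁻¹ * H (y * v) ∈ (Vf (j + 1)).map L) :
    ∀ v ∈ Vf 1, ∃ y : ℕ → V, y 1 = v ∧
      (∀ n, 1 ≤ n → y n ∈ Vf 1) ∧
      (∀ n, 1 ≤ n → y (n + 1) * (y n)⁻¹ ∈ Vf (n + 1)) ∧
      (∀ n, 1 ≤ n → L (y n) * H (y n) * (L v)⁻¹ ∈ (Vf (n + 1)).map L) := by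
  intro v hv
  have hle : ∀ n, Vf (n + 1) ≤ Vf 1 := fun n => antitone_nat_of_succ_le hdesc (by omega)
  have hbase : defect L H v v ∈ (Vf 2).map L := by
    have hLv : defect L H v 1 = L v⁻¹ := by simp [defect, hH1]
    simpa using defect_inv_mul_mem_map (hN := hnormal 1) (hM := hnormal 2) (inv_mem hv) hLv
      (hHord 1 (one_mem _) 1 le_rfl)
  -- indexed from `0`: `y k` is the paper's `y⁽ᵏ⁺¹⁾`
  obtain ⟨y, hy0, hy⟩ := exists_seq_of_exists_step
    (fun n y => y ∈ Vf 1 ∧ defect L H v y ∈ (Vf (n + 2)).map L)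
    (fun n y y' => y' * y⁻¹ ∈ Vf (n + 2)) ⟨hv, hbase⟩ <| by
      rintro n y ⟨hy1, w, hw, hLw⟩
      refine ⟨w⁻¹ * y, by simpa using inv_mem hw, mul_mem (inv_mem (hle _ hw)) hy1, ?_⟩
      exact defect_inv_mul_mem_map (hN := hnormal _) (hM := hnormal _) hw hLw.symm
        (hHord y hy1 (n + 2) (by omega))
  refine ⟨fun n => y (n - 1), hy0, ?_, ?_, ?_⟩ <;> intro n hn <;>
    obtain ⟨k, rfl⟩ := Nat.exists_eq_add_one_of_ne_zero (by omega : n ≠ 0)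
  exacts [(hy k).1.1, (hy k).2, (hy k).1.2]

/-- Order-by-order solvability of `L(y)H(y) = L(v)`: if `H` is a higher-order term
for the filtration `(V j)`, then every `v ∈ V₁` admits an order-by-order solution. -/
theorem stmt11 {V W : Type*} [Group V] [Group W] (L : V →* W)
    (Vf : ℕ → Subgroup V)
    (hdesc : ∀ j, Vf (j + 1) ≤ Vf j)
    (hnormal : ∀ j, (Vf j).Normal)
    (hcomm : ∀ j, 1 ≤ j → ∀ a ∈ Vf 1, ∀ b ∈ Vf j, ⁅a, b⁆ ∈ Vf (j + 1))
    (H : V → W) (hH1 : H 1 = 1)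
    (hHord : ∀ y ∈ Vf 1, ∀ j, 1 ≤ j → ∀ v ∈ Vf j,
      (H y)⁻¹ * H (y * v) ∈ (Vf (j + 1)).map L) :
    ∀ v ∈ Vf 1, ∃ y : ℕ → V, y 1 = v ∧
      (∀ n, 1 ≤ n → y n ∈ Vf 1) ∧
      (∀ n, 1 ≤ n → y (n + 1) * (y n)⁻¹ ∈ Vf (n + 1)) ∧
      (∀ n, 1 ≤ n → L (y n) * H (y n) * (L v)⁻¹ ∈ (Vf (n + 1)).map L) :=
  stmt11_general L Vf hdesc hnormal H hH1 hHord
end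

section
/- Let V, W be groups with L : V → W a homomorphism, (V_j) a filtration by normal subgroups with [V₁,V_j] ⊆ V_{j+1}, and H : V → W a higher-order map (H(y)^{-1}H(yV_j) ⊆ L(V_{j+1}) for y ∈ V₁, j ≥ 1). Suppose L is injective and (y₁^{(n)}), (y₂^{(n)}) are two order-by-order solutions of L(y)H(y) = L(v) with y₁^{(1)}, y₂^{(1)} ∈ V₁. Then y₁^{(n)}(y₂^{(n)})^{-1} ∈ V_n for every n. -/
open scoped commutatorElement

/-!
Induct on `n`. If `y₁⁽ⁿ⁾(y₂⁽ⁿ⁾)⁻¹ ∈ V_n`, the Cauchy conditions give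
`y₁ = y₂ w` with `w ∈ V_n` at stage `n + 1`, so the higher-order property makes
`H(y₁) ≡ H(y₂)` modulo `L(V_{n+1})`. Comparing the two equations
`L(yᵢ)H(yᵢ) ≡ L(v)` modulo `L(V_{n+1})` then forces `L(y₁) ≡ L(y₂)`, and
injectivity of `L` pulls this back to `V`.
-/

section

variable {V W : Type*} [Group V] [Group W]

theorem mul_inv_mem_of_solves_mod {K : Subgroup V} (hK : K.Normal) {L : V →* W}
    (hinj : Function.Injective L) {H : V → W} {v y y' : V}
    (hy : L y * H y * (L v)⁻¹ ∈ K.map L) (hy' : L y' * H y' * (L v)⁻¹ ∈ K.map L)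
    (hH : (H y)⁻¹ * H y' ∈ K.map L) :
    y' * y⁻¹ ∈ K := by
  obtain ⟨p, hp, hpL⟩ := hy
  obtain ⟨m, hm, hmL⟩ := hy'
  obtain ⟨c, hc, hcL⟩ := hH
  -- `L(y')L(y)⁻¹ = [L(y')H(y')L(v)⁻¹] · L(v)(H(y)⁻¹H(y'))⁻¹L(v)⁻¹ · [L(y)H(y)L(v)⁻¹]⁻¹`
  have key : y' * y⁻¹ = m * (v * c⁻¹ * v⁻¹) * p⁻¹ := hinj <| by
    simp only [map_mul, map_inv]
    rw [hmL, hpL, hcL]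
    group
  rw [key]
  exact mul_mem (mul_mem hm (hK.conj_mem _ (inv_mem hc) v)) (inv_mem hp)

theorem mem_of_succ_mul_inv_mem {Vf : ℕ → Subgroup V} (hanti : Antitone Vf) {y : ℕ → V}
    (h1 : y 1 ∈ Vf 1) (hstep : ∀ n, 1 ≤ n → y (n + 1) * (y n)⁻¹ ∈ Vf n) :
    ∀ n, 1 ≤ n → y n ∈ Vf 1 := by
  intro n hn
  induction n, hn using Nat.le_induction with
  | base => exact h1
  | succ k hk ih => simpa using mul_mem (hanti hk (hstep k hk)) ih

end

theorem stmt12_general {V W : Type*} [Group V] [Group W] (L : V →* W)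
    (Vf : ℕ → Subgroup V)
    (hdesc : ∀ j, Vf (j + 1) ≤ Vf j)
    (hnormal : ∀ j, (Vf j).Normal)
    (H : V → W)
    (hHord : ∀ y ∈ Vf 1, ∀ j, 1 ≤ j → ∀ w ∈ Vf j,
      (H y)⁻¹ * H (y * w) ∈ (Vf (j + 1)).map L)
    (hinj : Function.Injective L)
    (v : V) (y₁ y₂ : ℕ → V)
    (h₁V : y₁ 1 ∈ Vf 1) (h₂V : y₂ 1 ∈ Vf 1)
    (h₁cauchy : ∀ n, 1 ≤ n → y₁ (n + 1) * (y₁ n)⁻¹ ∈ Vf n)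
    (h₂cauchy : ∀ n, 1 ≤ n → y₂ (n + 1) * (y₂ n)⁻¹ ∈ Vf n)
    (h₁sol : ∀ n, 1 ≤ n → L (y₁ n) * H (y₁ n) * (L v)⁻¹ ∈ (Vf n).map L)
    (h₂sol : ∀ n, 1 ≤ n → L (y₂ n) * H (y₂ n) * (L v)⁻¹ ∈ (Vf n).map L) :
    ∀ n, 1 ≤ n → y₁ n * (y₂ n)⁻¹ ∈ Vf n := by
  have h₂mem := mem_of_succ_mul_inv_mem (antitone_nat_of_succ_le hdesc) h₂V h₂cauchy
  intro n hn
  induction n, hn using Nat.le_induction with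
  | base => exact mul_mem h₁V (inv_mem h₂V)
  | succ n hn ih =>
    have hd : y₁ (n + 1) * (y₂ (n + 1))⁻¹ ∈ Vf n := by
      have split : y₁ (n + 1) * (y₂ (n + 1))⁻¹ = (y₁ (n + 1) * (y₁ n)⁻¹) *
          (y₁ n * (y₂ n)⁻¹) * (y₂ (n + 1) * (y₂ n)⁻¹)⁻¹ := by group
      rw [split]
      exact mul_mem (mul_mem (h₁cauchy n hn) ih) (inv_mem (h₂cauchy n hn))
    have hH := hHord _ (h₂mem (n + 1) (by omega)) n hn _ ((hnormal n).mem_comm hd)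
    rw [mul_inv_cancel_left] at hH
    exact mul_inv_mem_of_solves_mod (hnormal (n + 1)) hinj
      (h₂sol (n + 1) (by omega)) (h₁sol (n + 1) (by omega)) hH

/-- Eventual uniqueness: if `L` is injective, any two order-by-order solutions
`y₁, y₂` of `L(y)H(y) = L(v)` with `y₁⁽¹⁾, y₂⁽¹⁾ ∈ V₁` satisfy
`y₁⁽ⁿ⁾(y₂⁽ⁿ⁾)⁻¹ ∈ V_n` for all `n`. -/
theorem stmt12 {V W : Type*} [Group V] [Group W] (L : V →* W)
    (Vf : ℕ → Subgroup V)
    (hdesc : ∀ j, Vf (j + 1) ≤ Vf j)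
    (hnormal : ∀ j, (Vf j).Normal)
    (hcomm : ∀ j, 1 ≤ j → ∀ a ∈ Vf 1, ∀ b ∈ Vf j, ⁅a, b⁆ ∈ Vf (j + 1))
    (H : V → W) (hH1 : H 1 = 1)
    (hHord : ∀ y ∈ Vf 1, ∀ j, 1 ≤ j → ∀ w ∈ Vf j,
      (H y)⁻¹ * H (y * w) ∈ (Vf (j + 1)).map L)
    (hinj : Function.Injective L)
    (v : V) (y₁ y₂ : ℕ → V)
    (h₁V : y₁ 1 ∈ Vf 1) (h₂V : y₂ 1 ∈ Vf 1)
    (h₁cauchy : ∀ n, 1 ≤ n → y₁ (n + 1) * (y₁ n)⁻¹ ∈ Vf n)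
    (h₂cauchy : ∀ n, 1 ≤ n → y₂ (n + 1) * (y₂ n)⁻¹ ∈ Vf n)
    (h₁sol : ∀ n, 1 ≤ n → L (y₁ n) * H (y₁ n) * (L v)⁻¹ ∈ (Vf n).map L)
    (h₂sol : ∀ n, 1 ≤ n → L (y₂ n) * H (y₂ n) * (L v)⁻¹ ∈ (Vf n).map L) :
    ∀ n, 1 ≤ n → y₁ n * (y₂ n)⁻¹ ∈ Vf n :=
  stmt12_general L Vf hdesc hnormal H hHord hinj v y₁ y₂ h₁V h₂V h₁cauchy h₂cauchy h₁sol h₂sol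
end
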